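/- arXiv:2411.08465 — 2 statements merged into one kernel-verified Lean document; each statement's English description precedes it below -/
import Mathlib

section
/- If ℓ(s_i w) > ℓ(w), then for every l, A_l(s_i w) is the disjoint union of A_l(w) and {s_i·α : α ∈ A_{l,i}(w)}, and the latter set is nonempty for at least one value of l. In particular A_l(w) ⊆ A_l(s_i w) for every l, and the set A_l(s_i w) is preserved under the entrywise action of s_i. -/
def invCount {n : ℕ} (w : Equiv.Perm (Fin n)) : ℕ :=
  (Finset.univ.filter (fun p : Fin n × Fin n => p.1 < p.2 ∧ w p.2 < w p.1)).card

def simpleT (n : ℕ) (i : ℕ) (h : i + 1 < n) : Equiv.Perm (Fin n) :=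
  Equiv.swap ⟨i, Nat.lt_of_succ_lt h⟩ ⟨i + 1, h⟩

/-- The first `l` values of `w`, as a finset of natural numbers. -/
def firstVals {n : ℕ} (w : Equiv.Perm (Fin n)) (l : ℕ) : Finset ℕ :=
  (Finset.univ.filter (fun j : Fin n => (j : ℕ) < l)).image (fun j => (w j : ℕ))

/-- `w^l`: the increasing rearrangement of the first `l` values of `w`. -/
def wSorted {n : ℕ} (w : Equiv.Perm (Fin n)) (l : ℕ) : List ℕ :=
  (firstVals w l).sort (· ≤ ·)

/-- `A_l(w)`: strictly increasing sequences bounded entrywise by `w^l`. -/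
def A {n : ℕ} (w : Equiv.Perm (Fin n)) (l : ℕ) : Set (List ℕ) :=
  {a | a.Chain' (· < ·) ∧ List.Forall₂ (· ≤ ·) a (wSorted w l)}

/-- The entrywise action of the transposition `s_i = (i, i+1)` on a sequence,
followed by reordering increasingly. -/
def siAct (i : ℕ) (a : List ℕ) : List ℕ :=
  List.insertionSort (· ≤ ·) (a.map (fun x => Equiv.swap i (i + 1) x))

/-- `A_{l,i}(w) = {α ∈ A_l(w) : s_i·α ∉ A_l(w)}`. -/
def Ai {n : ℕ} (w : Equiv.Perm (Fin n)) (l : ℕ) (i : ℕ) : Set (List ℕ) :=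
  {a | a ∈ A w l ∧ siAct i a ∉ A w l}

/-!
For sorted lists, entrywise comparison is equivalent to comparing the number of entries below
every threshold `t` (the Gale order), and in these counts the action of `s_i` is visible only at
`t = i + 1`. The hypothesis `ℓ(s_i w) > ℓ(w)` says that `i` precedes `i + 1` in `w`, so the first
`l` values of `w` never contain `i + 1` without `i`; comparing the counts at `i`, `i + 1`, `i + 2`
then shows that `α` is bounded by `(s_i w)^l` iff `α` or `s_i·α` is bounded by `w^l`.
-/

open List

def GaleLE (a b : List ℕ) : Prop :=
  a.length = b.length ∧ ∀ t, b.countP (· < t) ≤ a.countP (· < t)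

lemma countP_lt_eq_zero {α : Type*} [LinearOrder α] {l : List α} {t : α} (h : ∀ z ∈ l, t ≤ z) :
    l.countP (· < t) = 0 :=
  countP_eq_zero.2 fun z hz => by simpa using h z hz

lemma countP_eq_countP_add_count {α : Type*} [DecidableEq α] {p q : α → Prop} [DecidablePred p]
    [DecidablePred q] {c : α} (hpq : ∀ x, p x ↔ q x ∨ x = c) (hc : ¬ q c) (l : List α) :
    l.countP p = l.countP q + l.count c := by
  induction l with
  | nil => rfl
  | cons x l ih =>
    rw [countP_cons, countP_cons, count_cons, ih]
    by_cases hx : x = c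
    · subst hx; simp [hpq, hc, add_assoc]
    · simp [hpq, hx]; omega

lemma countP_lt_succ (l : List ℕ) (t : ℕ) :
    l.countP (· < t + 1) = l.countP (· < t) + l.count t :=
  countP_eq_countP_add_count (p := (· < t + 1)) (q := (· < t)) (fun x => by omega) (lt_irrefl t) l

theorem forall₂_le_iff_galeLE {a b : List ℕ} (ha : a.Pairwise (· ≤ ·)) (hb : b.Pairwise (· ≤ ·)) :
    Forall₂ (· ≤ ·) a b ↔ GaleLE a b := by
  induction a generalizing b with
  | nil => cases b <;> simp [GaleLE]
  | cons x a ih =>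
    cases b with
    | nil => simp [GaleLE]
    | cons y b =>
      have hb₀ : ∀ t ≤ y, b.countP (· < t) = 0 := fun t ht =>
        countP_lt_eq_zero fun z hz => ht.trans (rel_of_pairwise_cons hb hz)
      rw [forall₂_cons, ih ha.of_cons hb.of_cons]
      constructor
      · rintro ⟨hxy, hlen, h⟩
        refine ⟨by simp [hlen], fun t => ?_⟩
        simp only [countP_cons, decide_eq_true_eq]
        by_cases hty : y < t
        · simp only [hty, lt_of_le_of_lt hxy hty, if_true]
          exact Nat.add_le_add_right (h t) 1
        · simp [hb₀ t (not_lt.1 hty), hty]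
      · rintro ⟨hlen, h⟩
        have hxy : x ≤ y := by
          by_contra! hyx
          have h₀ := countP_lt_eq_zero (l := x :: a) (t := y + 1) fun z hz => by
            rcases mem_cons.1 hz with rfl | hz
            · omega
            · exact (rel_of_pairwise_cons ha hz).trans' hyx
          have := h (y + 1)
          rw [h₀, countP_cons] at this
          simp at this
        refine ⟨hxy, by simpa using hlen, fun t => ?_⟩
        by_cases hty : y < t
        · have := h t
          simp only [countP_cons, decide_eq_true_eq, hty, lt_of_le_of_lt hxy hty, if_true] at this
          omega
        · simp [hb₀ t (not_lt.1 hty)]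

section siAct

variable {i : ℕ}

lemma swap_lt_iff_of_ne {t : ℕ} (ht : t ≠ i + 1) (x : ℕ) :
    Equiv.swap i (i + 1) x < t ↔ x < t := by
  rw [Equiv.swap_apply_def]; split_ifs <;> omega

lemma siAct_perm (a : List ℕ) : siAct i a ~ a.map (Equiv.swap i (i + 1)) :=
  perm_insertionSort _ _

@[simp]
lemma length_siAct (a : List ℕ) : (siAct i a).length = a.length := by
  simp [(siAct_perm a).length_eq]

lemma sortedLT_siAct {a : List ℕ} (ha : a.SortedLT) : (siAct i a).SortedLT :=
  sortedLE_insertionSort.sortedLT_of_nodup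
    ((siAct_perm a).nodup_iff.2 (ha.nodup.map (Equiv.injective _)))

lemma siAct_siAct {a : List ℕ} (ha : a.SortedLT) : siAct i (siAct i a) = a := by
  refine (sortedLT_siAct (sortedLT_siAct ha)).eq_of_mem_iff ha fun x => ?_
  simp [(siAct_perm _).mem_iff, Equiv.swap_apply_eq_iff]

lemma countP_siAct (p : ℕ → Bool) (a : List ℕ) :
    (siAct i a).countP p = a.countP (p ∘ Equiv.swap i (i + 1)) := by
  rw [(siAct_perm a).countP_eq, countP_map]

lemma countP_lt_siAct_of_ne {t : ℕ} (ht : t ≠ i + 1) (a : List ℕ) :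
    (siAct i a).countP (· < t) = a.countP (· < t) := by
  rw [countP_siAct]
  exact countP_congr fun x _ => by simp [swap_lt_iff_of_ne ht]

lemma countP_lt_siAct_succ (a : List ℕ) :
    (siAct i a).countP (· < i + 1) = a.countP (· < i) + a.count (i + 1) := by
  rw [countP_siAct]
  refine countP_eq_countP_add_count (p := fun x => Equiv.swap i (i + 1) x < i + 1)
    (q := (· < i)) (fun x => ?_) (by omega) a
  rw [Equiv.swap_apply_def]; split_ifs <;> omega

end siAct

section galeLE

variable {i : ℕ} {a b : List ℕ}

lemma galeLE_iff_of_threshold (k : ℕ) : GaleLE a b ↔ a.length = b.length ∧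
    (∀ t ≠ k, b.countP (· < t) ≤ a.countP (· < t)) ∧ b.countP (· < k) ≤ a.countP (· < k) := by
  refine and_congr_right fun _ => ⟨fun h => ⟨fun t _ => h t, h k⟩, fun h t => ?_⟩
  rcases eq_or_ne t k with rfl | ht
  exacts [h.2, h.1 t ht]

lemma count_succ_le_count (hb : b.Nodup) (hi : i + 1 ∈ b → i ∈ b) :
    b.count (i + 1) ≤ b.count i := by
  by_cases h : i + 1 ∈ b
  · rw [count_eq_one_of_mem hb h, count_eq_one_of_mem hb (hi h)]
  · simp [count_eq_zero.2 h]

theorem galeLE_siAct_iff (ha : a.Nodup) (hb : b.Nodup) (hi : i + 1 ∈ b → i ∈ b) :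
    GaleLE a (siAct i b) ↔ GaleLE a b ∨ GaleLE (siAct i a) b := by
  have hx := nodup_iff_count_le_one.1 ha
  have hX₁ := nodup_iff_count_le_one.1 hb i
  have hX := count_succ_le_count hb hi
  simp only [galeLE_iff_of_threshold (i + 1), length_siAct, countP_lt_siAct_succ]
  simp only [countP_lt_succ]
  simp +contextual only [ne_eq, not_false_eq_true, countP_lt_siAct_of_ne]
  rw [← and_or_left, ← and_or_left]
  -- The three conditions agree away from the threshold `i + 1`; at `i + 1` they are compared
  -- using the thresholds `i` and `i + 2`.
  refine and_congr_right fun _ => and_congr_right fun hoff => ?_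
  have h₀ := hoff i (by omega)
  have h₂ := hoff (i + 1 + 1) (by omega)
  simp only [countP_lt_succ] at h₂
  have := hx i
  have := hx (i + 1)
  omega

end galeLE

def incSeqsBelow (b : List ℕ) : Set (List ℕ) :=
  {a | a.IsChain (· < ·) ∧ Forall₂ (· ≤ ·) a b}

section incSeqsBelow

variable {i : ℕ} {a b : List ℕ}

lemma mem_incSeqsBelow_iff (hb : b.SortedLT) : a ∈ incSeqsBelow b ↔ a.SortedLT ∧ GaleLE a b := by
  rw [incSeqsBelow, Set.mem_ofPred_eq, ← sortedLT_iff_isChain]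
  exact and_congr_right fun ha =>
    forall₂_le_iff_galeLE ha.sortedLE.pairwise hb.sortedLE.pairwise

theorem incSeqsBelow_siAct (hb : b.SortedLT) (hi : i + 1 ∈ b → i ∈ b) :
    incSeqsBelow (siAct i b) = incSeqsBelow b ∪
      siAct i '' {a | a ∈ incSeqsBelow b ∧ siAct i a ∉ incSeqsBelow b} := by
  ext c
  simp only [Set.mem_union, Set.mem_image, Set.mem_ofPred_eq, mem_incSeqsBelow_iff hb,
    mem_incSeqsBelow_iff (sortedLT_siAct hb)]
  constructor
  · rintro ⟨hc, hcb⟩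
    by_cases hc' : GaleLE c b
    · exact Or.inl ⟨hc, hc'⟩
    refine Or.inr ⟨siAct i c, ⟨⟨sortedLT_siAct hc, ?_⟩, ?_⟩, siAct_siAct hc⟩
    · exact ((galeLE_siAct_iff hc.nodup hb.nodup hi).1 hcb).resolve_left hc'
    · rw [siAct_siAct hc]
      exact fun h => hc' h.2
  · rintro (⟨hc, hcb⟩ | ⟨a, ⟨⟨ha, hab⟩, -⟩, rfl⟩)
    · exact ⟨hc, (galeLE_siAct_iff hc.nodup hb.nodup hi).2 (Or.inl hcb)⟩
    · refine ⟨sortedLT_siAct ha, (galeLE_siAct_iff (sortedLT_siAct ha).nodup hb.nodup hi).2 ?_⟩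
      rw [siAct_siAct ha]
      exact Or.inr hab

theorem siAct_mem_incSeqsBelow_siAct (hb : b.SortedLT) (hi : i + 1 ∈ b → i ∈ b)
    (ha : a ∈ incSeqsBelow (siAct i b)) : siAct i a ∈ incSeqsBelow (siAct i b) := by
  rw [mem_incSeqsBelow_iff (sortedLT_siAct hb)] at ha ⊢
  obtain ⟨ha, hab⟩ := ha
  refine ⟨sortedLT_siAct ha, ?_⟩
  rw [galeLE_siAct_iff (sortedLT_siAct ha).nodup hb.nodup hi, siAct_siAct ha, or_comm]
  exact (galeLE_siAct_iff ha.nodup hb.nodup hi).1 hab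

lemma siAct_not_mem_incSeqsBelow_self (hb : b.SortedLT) (hi : i ∈ b) (hi' : i + 1 ∉ b) :
    siAct i b ∉ incSeqsBelow b := by
  rw [mem_incSeqsBelow_iff hb]
  rintro ⟨-, -, h⟩
  have := h (i + 1)
  rw [countP_lt_siAct_succ, countP_lt_succ, count_eq_one_of_mem hb.nodup hi,
    count_eq_zero.2 hi'] at this
  omega

end incSeqsBelow

lemma lt_or_eq_of_swap_lt_swap {i u v : ℕ}
    (huv : Equiv.swap i (i + 1) u < Equiv.swap i (i + 1) v) : u < v ∨ (u = i + 1 ∧ v = i) := by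
  rw [Equiv.swap_apply_def, Equiv.swap_apply_def] at huv
  split_ifs at huv <;> omega

section perm

variable {n i : ℕ} (h : i + 1 < n) (w : Equiv.Perm (Fin n))

lemma simpleT_val (x : Fin n) : (simpleT n i h x : ℕ) = Equiv.swap i (i + 1) (x : ℕ) :=
  (Fin.val_injective.swap_apply _ _ x).symm

variable {h w} in
lemma inv_lt_inv_of_invCount_lt (hlen : invCount w < invCount (simpleT n i h * w)) :
    w⁻¹ ⟨i, by omega⟩ < w⁻¹ ⟨i + 1, h⟩ := by
  set p := w⁻¹ ⟨i + 1, h⟩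
  set q := w⁻¹ ⟨i, by omega⟩
  have hwp : w p = ⟨i + 1, h⟩ := w.apply_symm_apply _
  have hwq : w q = ⟨i, by omega⟩ := w.apply_symm_apply _
  -- Otherwise `(p, q)` is an inversion of `w` that `s_i` removes, while `s_i` keeps the others.
  by_contra! hle
  have hpq : p < q := hle.lt_of_ne fun e => by simpa using hwp.symm.trans ((congrArg w e).trans hwq)
  refine lt_asymm hlen (Finset.card_lt_card ((Finset.ssubset_iff_of_subset ?_).2 ⟨(p, q), ?_, ?_⟩))
  · rintro ⟨x, y⟩
    simp only [Finset.mem_filter, Finset.mem_univ, true_and, Equiv.Perm.mul_apply, Fin.lt_def,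
      simpleT_val]
    rintro ⟨hxy, hs⟩
    refine ⟨hxy, (lt_or_eq_of_swap_lt_swap hs).resolve_right ?_⟩
    rintro ⟨hy, hx⟩
    obtain rfl : y = p := Equiv.Perm.eq_inv_iff_eq.2 (Fin.ext hy)
    obtain rfl : x = q := Equiv.Perm.eq_inv_iff_eq.2 (Fin.ext hx)
    rw [← Fin.lt_def] at hxy
    exact lt_asymm hxy hpq
  · simp [hpq, hwp, hwq]
  · have hsi : simpleT n i h ⟨i, by omega⟩ = ⟨i + 1, h⟩ := Equiv.swap_apply_left _ _
    have hsi' : simpleT n i h ⟨i + 1, h⟩ = ⟨i, by omega⟩ := Equiv.swap_apply_right _ _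
    rw [Finset.mem_filter, Equiv.Perm.mul_apply, Equiv.Perm.mul_apply, hwp, hwq, hsi, hsi']
    simp

lemma val_mem_firstVals_iff (l : ℕ) (x : Fin n) :
    (x : ℕ) ∈ firstVals w l ↔ ((w⁻¹ x : Fin n) : ℕ) < l := by
  simp only [firstVals, Finset.mem_image, Finset.mem_filter, Finset.mem_univ, true_and]
  constructor
  · rintro ⟨j, hj, hjx⟩
    obtain rfl := Equiv.Perm.eq_inv_iff_eq.2 (Fin.ext hjx)
    exact hj
  · exact fun hx => ⟨w⁻¹ x, hx, by simp⟩

lemma firstVals_simpleT_mul (l : ℕ) :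
    firstVals (simpleT n i h * w) l = (firstVals w l).image (Equiv.swap i (i + 1)) := by
  simp only [firstVals, Finset.image_image]
  exact Finset.image_congr fun j _ => simpleT_val h (w j)

lemma sortedLT_wSorted (l : ℕ) : (wSorted w l).SortedLT :=
  Finset.sortedLT_sort _

lemma wSorted_simpleT_mul (l : ℕ) : wSorted (simpleT n i h * w) l = siAct i (wSorted w l) :=
  (sortedLT_wSorted _ l).eq_of_mem_iff (sortedLT_siAct (sortedLT_wSorted w l)) fun x => by
    simp [wSorted, firstVals_simpleT_mul, (siAct_perm _).mem_iff]

variable {h w}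

lemma mem_wSorted_of_succ_mem (hpos : w⁻¹ ⟨i, by omega⟩ < w⁻¹ ⟨i + 1, h⟩) (l : ℕ)
    (hl : i + 1 ∈ wSorted w l) : i ∈ wSorted w l := by
  rw [wSorted, Finset.mem_sort] at hl ⊢
  have := (val_mem_firstVals_iff w l ⟨i + 1, h⟩).1 hl
  exact (val_mem_firstVals_iff w l ⟨i, by omega⟩).2 (lt_trans (Fin.lt_def.1 hpos) this)

lemma exists_mem_wSorted_succ_not_mem (hpos : w⁻¹ ⟨i, by omega⟩ < w⁻¹ ⟨i + 1, h⟩) :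
    ∃ l, i ∈ wSorted w l ∧ i + 1 ∉ wSorted w l := by
  refine ⟨(w⁻¹ ⟨i, by omega⟩ : Fin n) + 1, ?_, ?_⟩ <;> rw [wSorted, Finset.mem_sort]
  · exact (val_mem_firstVals_iff w _ ⟨i, by omega⟩).2 (Nat.lt_succ_self _)
  · rw [val_mem_firstVals_iff w _ ⟨i + 1, h⟩]
    exact not_lt.2 (Fin.lt_def.1 hpos)

end perm

lemma A_eq_incSeqsBelow {n : ℕ} (w : Equiv.Perm (Fin n)) (l : ℕ) :
    A w l = incSeqsBelow (wSorted w l) :=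
  rfl

/-- If `ℓ(s_i w) > ℓ(w)` then `A_l(s_i w)` is the disjoint union of `A_l(w)` and the
`s_i`-images of `A_{l,i}(w)`, the latter being nonempty for some `l`; in particular
`A_l(w) ⊆ A_l(s_i w)` and `A_l(s_i w)` is preserved under the action of `s_i`. -/
theorem stmt9 (n : ℕ) (w : Equiv.Perm (Fin n)) (i : ℕ) (h : i + 1 < n)
    (hlen : invCount w < invCount (simpleT n i h * w)) :
    (∀ l : ℕ,
      A (simpleT n i h * w) l = A w l ∪ (siAct i '' Ai w l i) ∧
      Disjoint (A w l) (siAct i '' Ai w l i) ∧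
      A w l ⊆ A (simpleT n i h * w) l ∧
      (∀ a ∈ A (simpleT n i h * w) l, siAct i a ∈ A (simpleT n i h * w) l)) ∧
    ∃ l : ℕ, (siAct i '' Ai w l i).Nonempty := by
  have hpos := inv_lt_inv_of_invCount_lt hlen
  have hA (l : ℕ) : A (simpleT n i h * w) l = A w l ∪ siAct i '' Ai w l i := by
    rw [A_eq_incSeqsBelow, wSorted_simpleT_mul]
    exact incSeqsBelow_siAct (sortedLT_wSorted w l) (mem_wSorted_of_succ_mem hpos l)
  refine ⟨fun l => ⟨hA l, ?_, hA l ▸ Set.subset_union_left, fun a => ?_⟩, ?_⟩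
  · exact Set.disjoint_left.2 fun a ha ⟨c, hc, hca⟩ => hc.2 (hca ▸ ha)
  · rw [A_eq_incSeqsBelow, wSorted_simpleT_mul]
    exact siAct_mem_incSeqsBelow_siAct (sortedLT_wSorted w l) (mem_wSorted_of_succ_mem hpos l)
  · obtain ⟨l, hi, hi'⟩ := exists_mem_wSorted_succ_not_mem hpos
    refine ⟨l, _, _, ⟨⟨sortedLT_iff_isChain.1 (sortedLT_wSorted w l), forall₂_refl _⟩, ?_⟩, rfl⟩
    exact siAct_not_mem_incSeqsBelow_self (sortedLT_wSorted w l) hi hi'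
end

section
/- Let k ≤ l, w ∈ S_n, and suppose η = α + β for some α ∈ A_l(w), β ∈ A_k(w). Then for any set β' of size k with η₂ ⊆ β' ⊆ η₁ ∪ η₂, the following are equivalent: β_min ≤ β' ≤ β_max (entrywise on the sorted sequences); β' ∈ A_k(w) and there exists α' ∈ A_l(w) with α' + β' = η. -/
/-- `A_l^η(w) = {α ∈ A_l(w) : η₂ ⊆ α ⊆ η₁ ∪ η₂}` where `η = η₁ + 2η₂`. -/
def Aeta {n : ℕ} (w : Equiv.Perm (Fin n)) (l : ℕ) (η₁ η₂ : Finset ℕ) : Set (List ℕ) :=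
  {a | a ∈ A w l ∧ η₂ ⊆ a.toFinset ∧ a.toFinset ⊆ η₁ ∪ η₂}

namespace List

variable {α : Type*} [LinearOrder α]

theorem Forall₂.le_trans {a b c : List α} :
    Forall₂ (· ≤ ·) a b → Forall₂ (· ≤ ·) b c → Forall₂ (· ≤ ·) a c
  | .nil, .nil => .nil
  | .cons h₁ t₁, .cons h₂ t₂ => .cons (h₁.trans h₂) (t₁.le_trans t₂)

theorem Forall₂.countP_le_antitone {s t : List α} (h : Forall₂ (· ≤ ·) s t) (x : α) :
    t.countP (· ≤ x) ≤ s.countP (· ≤ x) := by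
  induction h with
  | nil => simp
  | @cons a b s t hab _ ih =>
    simp only [countP_cons, decide_eq_true_eq]
    by_cases hb : b ≤ x
    · simp [hb, hab.trans hb, ih]
    · simp only [hb, if_false]; split_ifs <;> omega

theorem countP_le_eq_zero_of_lt {t : List α} {b x : α} (ht : ∀ y ∈ t, b ≤ y) (hx : x < b) :
    t.countP (· ≤ x) = 0 :=
  countP_eq_zero.2 fun y hy => by simpa using hx.trans_le (ht y hy)

theorem forall₂_le_of_countP {s t : List α} (hs : s.Pairwise (· ≤ ·)) (ht : t.Pairwise (· ≤ ·))
    (hlen : s.length = t.length) (hcount : ∀ x, t.countP (· ≤ x) ≤ s.countP (· ≤ x)) :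
    Forall₂ (· ≤ ·) s t := by
  induction s generalizing t with
  | nil => cases t <;> simp_all
  | cons a s ih =>
    cases t with
    | nil => simp at hlen
    | cons b t =>
      obtain ⟨hs₁, hs₂⟩ := pairwise_cons.1 hs
      obtain ⟨ht₁, ht₂⟩ := pairwise_cons.1 ht
      have hab : a ≤ b := by
        by_contra! hba
        have := hcount b
        simp [countP_le_eq_zero_of_lt hs₁ hba, hba.not_ge] at this
      refine .cons hab (ih hs₂ ht₂ (by simpa using hlen) fun x => ?_)
      by_cases hbx : b ≤ x
      · simpa [hbx, hab.trans hbx] using hcount x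
      · simp [countP_le_eq_zero_of_lt ht₁ (not_le.1 hbx)]

theorem forall₂_le_iff_countP {s t : List α} (hs : s.Pairwise (· ≤ ·))
    (ht : t.Pairwise (· ≤ ·)) :
    Forall₂ (· ≤ ·) s t ↔ s.length = t.length ∧ ∀ x, t.countP (· ≤ x) ≤ s.countP (· ≤ x) :=
  ⟨fun h => ⟨h.length_eq, h.countP_le_antitone⟩, fun h => forall₂_le_of_countP hs ht h.1 h.2⟩

theorem forall₂_le_iff_of_coe_add_eq {a a' b b' : List α} (ha : a.Pairwise (· ≤ ·))
    (ha' : a'.Pairwise (· ≤ ·)) (hb : b.Pairwise (· ≤ ·)) (hb' : b'.Pairwise (· ≤ ·))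
    (h : (a : Multiset α) + b = a' + b') :
    Forall₂ (· ≤ ·) b b' ↔ Forall₂ (· ≤ ·) a' a := by
  have hlen : a.length + b.length = a'.length + b'.length := by
    simpa using congrArg Multiset.card h
  have hcount (x : α) :
      a.countP (· ≤ x) + b.countP (· ≤ x) = a'.countP (· ≤ x) + b'.countP (· ≤ x) := by
    simpa using congrArg (Multiset.countP (· ≤ x)) h
  rw [forall₂_le_iff_countP hb hb', forall₂_le_iff_countP ha' ha]
  refine and_congr (by omega) (forall_congr' fun x => ?_)
  have := hcount x
  omega

end List

namespace Finset

variable {α : Type*} [DecidableEq α]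

theorem count_val (s : Finset α) (x : α) : s.val.count x = if x ∈ s then 1 else 0 :=
  Multiset.count_eq_of_nodup s.nodup

theorem val_sdiff_union_add_eq {η₁ η₂ β : Finset α} (hd : Disjoint η₁ η₂) (hβ₁ : η₂ ⊆ β)
    (hβ₂ : β ⊆ η₁ ∪ η₂) : ((η₁ \ β) ∪ η₂).val + β.val = η₁.val + 2 • η₂.val := by
  ext x
  simp only [Multiset.count_add, Multiset.count_nsmul, count_val, mem_union, mem_sdiff]
  have : x ∈ η₁ → x ∉ η₂ := fun h => disjoint_left.1 hd h
  have := @hβ₁ x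
  have := @hβ₂ x
  by_cases x ∈ η₁ <;> by_cases x ∈ η₂ <;> by_cases x ∈ β <;> simp_all

theorem subset_and_subset_union_of_add_eq {s : Multiset α} {η₁ η₂ β : Finset α}
    (h : s + β.val = η₁.val + 2 • η₂.val) : (∀ x ∈ η₂, x ∈ s) ∧ ∀ x ∈ s, x ∈ η₁ ∪ η₂ := by
  refine ⟨fun x hx => ?_, fun x hx => ?_⟩
  · have hcount := congrArg (Multiset.count x) h
    simp only [Multiset.count_add, Multiset.count_nsmul, count_val, hx, if_true] at hcount
    rw [← Multiset.count_pos]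
    split_ifs at hcount <;> omega
  · have : x ∈ s + β.val := Multiset.mem_add.2 (.inl hx)
    rw [h] at this
    simpa [Multiset.mem_add, Multiset.mem_nsmul] using this

end Finset

theorem pairwise_le_of_mem_A {n : ℕ} {w : Equiv.Perm (Fin n)} {l : ℕ} {a : List ℕ}
    (ha : a ∈ A w l) : a.Pairwise (· ≤ ·) :=
  (List.isChain_iff_pairwise.1 ha.1).imp le_of_lt

theorem sort_mem_A_of_forall₂_le {n : ℕ} {w : Equiv.Perm (Fin n)} {l : ℕ} {s : Finset ℕ}
    {a : List ℕ} (ha : a ∈ A w l) (h : List.Forall₂ (· ≤ ·) (s.sort (· ≤ ·)) a) :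
    s.sort (· ≤ ·) ∈ A w l :=
  ⟨(Finset.sortedLT_sort s).isChain, h.le_trans ha.2⟩

theorem stmt15_general (n : ℕ) (w : Equiv.Perm (Fin n)) (k l : ℕ)
    (η₁ η₂ : Finset ℕ) (hd : Disjoint η₁ η₂)
    (amax : List ℕ) (ham : amax ∈ Aeta w l η₁ η₂)
    (hamax : ∀ a ∈ Aeta w l η₁ η₂, List.Forall₂ (· ≤ ·) a amax)
    (bmax : List ℕ) (hbm : bmax ∈ Aeta w k η₁ η₂)
    (hbmax : ∀ b ∈ Aeta w k η₁ η₂, List.Forall₂ (· ≤ ·) b bmax)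
    (bmin : Finset ℕ)
    (hbmin : (↑amax : Multiset ℕ) + bmin.val = η₁.val + 2 • η₂.val)
    (β : Finset ℕ) (hβ1 : η₂ ⊆ β) (hβ2 : β ⊆ η₁ ∪ η₂) :
    (List.Forall₂ (· ≤ ·) (bmin.sort (· ≤ ·)) (β.sort (· ≤ ·)) ∧
      List.Forall₂ (· ≤ ·) (β.sort (· ≤ ·)) bmax) ↔
    (β.sort (· ≤ ·) ∈ A w k ∧
      ∃ a ∈ A w l, (↑a : Multiset ℕ) + β.val = η₁.val + 2 • η₂.val) := by
  have hamax_sorted := pairwise_le_of_mem_A ham.1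
  have hsort (s : Finset ℕ) : (↑(s.sort (· ≤ ·)) : Multiset ℕ) = s.val := Finset.sort_eq _ _
  have hcompl {a : List ℕ} (ha : a.Pairwise (· ≤ ·)) (heq : ↑a + β.val = η₁.val + 2 • η₂.val) :
      List.Forall₂ (· ≤ ·) (bmin.sort (· ≤ ·)) (β.sort (· ≤ ·)) ↔ List.Forall₂ (· ≤ ·) a amax :=
    List.forall₂_le_iff_of_coe_add_eq hamax_sorted ha (Finset.pairwise_sort _ _)
      (Finset.pairwise_sort _ _) (by rw [hsort, hsort, hbmin, heq])
  constructor
  · rintro ⟨hmin, hmax⟩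
    set α' := ((η₁ \ β) ∪ η₂).sort (· ≤ ·)
    have hα' : ↑α' + β.val = η₁.val + 2 • η₂.val := by
      rw [hsort]; exact Finset.val_sdiff_union_add_eq hd hβ1 hβ2
    refine ⟨sort_mem_A_of_forall₂_le hbm.1 hmax, α', ?_, hα'⟩
    exact sort_mem_A_of_forall₂_le ham.1 ((hcompl (Finset.pairwise_sort _ _) hα').1 hmin)
  · rintro ⟨hβA, a, haA, ha⟩
    obtain ⟨ha₁, ha₂⟩ := Finset.subset_and_subset_union_of_add_eq ha
    have haη : a ∈ Aeta w l η₁ η₂ :=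
      ⟨haA, fun x hx => List.mem_toFinset.2 (ha₁ x hx),
        fun x hx => ha₂ x (List.mem_toFinset.1 hx)⟩
    have hβη : β.sort (· ≤ ·) ∈ Aeta w k η₁ η₂ := by
      refine ⟨hβA, ?_, ?_⟩ <;> rwa [Finset.sort_toFinset]
    exact ⟨(hcompl (pairwise_le_of_mem_A haA) ha).2 (hamax a haη), hbmax _ hβη⟩

/-- For a size-`k` set `β'` with `η₂ ⊆ β' ⊆ η₁ ∪ η₂`: `β_min ≤ β' ≤ β_max` iff
`β' ∈ A_k(w)` and `η = α' + β'` for some `α' ∈ A_l(w)`. -/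
theorem stmt15 (n : ℕ) (w : Equiv.Perm (Fin n)) (k l : ℕ) (hkl : k ≤ l)
    (η₁ η₂ : Finset ℕ) (hd : Disjoint η₁ η₂)
    (a0 : List ℕ) (ha0 : a0 ∈ A w l) (b0 : List ℕ) (hb0 : b0 ∈ A w k)
    (hsum : (↑a0 + ↑b0 : Multiset ℕ) = η₁.val + 2 • η₂.val)
    (amax : List ℕ) (ham : amax ∈ Aeta w l η₁ η₂)
    (hamax : ∀ a ∈ Aeta w l η₁ η₂, List.Forall₂ (· ≤ ·) a amax)
    (bmax : List ℕ) (hbm : bmax ∈ Aeta w k η₁ η₂)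
    (hbmax : ∀ b ∈ Aeta w k η₁ η₂, List.Forall₂ (· ≤ ·) b bmax)
    (bmin : Finset ℕ)
    (hbmin : (↑amax : Multiset ℕ) + bmin.val = η₁.val + 2 • η₂.val)
    (β : Finset ℕ) (hβc : β.card = k) (hβ1 : η₂ ⊆ β) (hβ2 : β ⊆ η₁ ∪ η₂) :
    (List.Forall₂ (· ≤ ·) (bmin.sort (· ≤ ·)) (β.sort (· ≤ ·)) ∧
      List.Forall₂ (· ≤ ·) (β.sort (· ≤ ·)) bmax) ↔
    (β.sort (· ≤ ·) ∈ A w k ∧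
      ∃ a ∈ A w l, (↑a : Multiset ℕ) + β.val = η₁.val + 2 • η₂.val) :=
  stmt15_general n w k l η₁ η₂ hd amax ham hamax bmax hbm hbmax bmin hbmin β hβ1 hβ2
end
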